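/- If A = ∫_M g(x) P_x dμ(x) and C = ∫_M h(x) P_x dμ(x) are two operators with contravariant symbols g and h (with respect to a resolution of identity by coherent projectors), then ⟨A, C⟩_HS = ∫_M conj(σ(A)(x)) h(x) dμ(x), where σ(A)(x) = Tr(A P_x). -/

import Mathlib

open MeasureTheory
open scoped ComplexInnerProductSpace

/-- The coherent projector `P_e = |e⟩⟨e| / ⟨e, e⟩`. -/
noncomputable def coherentProj {H : Type*} [NormedAddCommGroup H]
    [InnerProductSpace ℂ H] (e : H) : H →L[ℂ] H :=
  ((⟪e, e⟫ : ℂ))⁻¹ • (innerSL ℂ e).smulRight e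


lemma trace_eq_sum_inner' {H : Type*} [NormedAddCommGroup H]
    [InnerProductSpace ℂ H] [FiniteDimensional ℂ H]
    (b : OrthonormalBasis (Fin (Module.finrank ℂ H)) ℂ H) (f : H →ₗ[ℂ] H) :
    LinearMap.trace ℂ H f = ∑ i, ⟪b i, f (b i)⟫ := by
  rw [LinearMap.trace_eq_matrix_trace ℂ b.toBasis, Matrix.trace]
  simp [Matrix.diag, LinearMap.toMatrix_apply, OrthonormalBasis.coe_toBasis,
    OrthonormalBasis.coe_toBasis_repr_apply, OrthonormalBasis.repr_apply_apply]

lemma trace_adjoint' {H : Type*} [NormedAddCommGroup H]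
    [InnerProductSpace ℂ H] [FiniteDimensional ℂ H] (A : H →L[ℂ] H) :
    LinearMap.trace ℂ H (ContinuousLinearMap.adjoint A).toLinearMap
      = starRingEnd ℂ (LinearMap.trace ℂ H A.toLinearMap) := by
  obtain b := stdOrthonormalBasis ℂ H
  rw [trace_eq_sum_inner' b, trace_eq_sum_inner' b, map_sum]
  congr 1; ext i
  rw [ContinuousLinearMap.coe_coe, ContinuousLinearMap.adjoint_inner_right,
    ← inner_conj_symm]
  rfl
lemma coherentProj_selfAdjoint {H : Type*} [NormedAddCommGroup H]
    [InnerProductSpace ℂ H] [FiniteDimensional ℂ H] (e : H) :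
    ContinuousLinearMap.adjoint (coherentProj e) = coherentProj e := by
  rw [eq_comm, ContinuousLinearMap.eq_adjoint_iff]
  intro x y
  simp only [coherentProj, ContinuousLinearMap.smul_apply,
    ContinuousLinearMap.smulRight_apply, innerSL_apply_apply, inner_smul_left,
    inner_smul_right, map_inv₀, inner_conj_symm]
  ring_nf

lemma trace_comp_conj {H : Type*} [NormedAddCommGroup H]
    [InnerProductSpace ℂ H] [FiniteDimensional ℂ H] (A P : H →L[ℂ] H)
    (hP : ContinuousLinearMap.adjoint P = P) :
    starRingEnd ℂ (LinearMap.trace ℂ H (A ∘L P).toLinearMap)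
      = LinearMap.trace ℂ H ((ContinuousLinearMap.adjoint A ∘L P).toLinearMap) := by
  rw [← trace_adjoint', ContinuousLinearMap.adjoint_comp, hP]
  have : ((P ∘L ContinuousLinearMap.adjoint A).toLinearMap)
      = P.toLinearMap * (ContinuousLinearMap.adjoint A).toLinearMap := rfl
  rw [this, LinearMap.trace_mul_comm]
  rfl

/-- If `A = ∫ g(x) P_x dμ(x)` and `C = ∫ h(x) P_x dμ(x)` have contravariant symbols
`g` and `h`, then `⟨A, C⟩_HS = ∫ conj(σ(A)(x)) h(x) dμ(x)` where `σ(A)(x) = Tr(A P_x)`. -/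
theorem hs_pairing_contravariant {H M : Type*} [NormedAddCommGroup H]
    [InnerProductSpace ℂ H] [FiniteDimensional ℂ H]
    [MeasurableSpace H] [BorelSpace H]
    [MeasurableSpace M] (μ : Measure M) [IsFiniteMeasure μ]
    (e : M → H) (hmeas : Measurable e) (hne : ∀ x, e x ≠ 0)
    (g h : M → ℂ) (hgm : Measurable g) (hhm : Measurable h)
    (hgint : Integrable (fun x => g x • coherentProj (e x)) μ)
    (hhint : Integrable (fun x => h x • coherentProj (e x)) μ)
    (A C : H →L[ℂ] H)
    (hA : A = ∫ x, g x • coherentProj (e x) ∂μ)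
    (hC : C = ∫ x, h x • coherentProj (e x) ∂μ) :
    LinearMap.trace ℂ H ((ContinuousLinearMap.adjoint A ∘L C).toLinearMap)
      = ∫ x, starRingEnd ℂ
          (LinearMap.trace ℂ H ((A ∘L coherentProj (e x)).toLinearMap)) * h x ∂μ := by
  subst hC
  set Aad := ContinuousLinearMap.adjoint A with hAad
  let L : (H →L[ℂ] H) →ₗ[ℂ] ℂ :=
    (LinearMap.trace ℂ H).comp ((LinearMap.mulLeft ℂ (Aad.toLinearMap)).comp
      (ContinuousLinearMap.coeLM ℂ))
  let T : (H →L[ℂ] H) →L[ℂ] ℂ := LinearMap.toContinuousLinearMap L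
  have hT : ∀ X : H →L[ℂ] H,
      T X = LinearMap.trace ℂ H ((Aad ∘L X).toLinearMap) := fun X => rfl
  rw [← hT, ← T.integral_comp_comm hhint]
  congr 1
  ext x
  rw [hT, ContinuousLinearMap.comp_smul, trace_comp_conj A _ (coherentProj_selfAdjoint (e x))]
  simp [mul_comm, hAad]
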